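/- (Theorem 2, single mode-pair case: PWA system simulated by a PWA abstraction.) Let A ∈ ℝ^{n×n}, B ∈ ℝ^{n×p}, C ∈ ℝ^{k×n} define one mode of the concrete PWA system with polyhedral cell {x : E x ≥ f} (E ∈ ℝ^{b×n}, f ∈ ℝ^b), and let F ∈ ℝ^{m×m}, G ∈ ℝ^{m×q}, H ∈ ℝ^{k×m}, L ∈ ℝ^{q×m} define one mode of the transformed PWA abstraction, active on the region described in the concrete state space by {x : E_c x ≥ f_c} (E_c ∈ ℝ^{l×n}, f_c ∈ ℝ^l). Let P ∈ ℝ^{n×m}, Q ∈ ℝ^{p×m} satisfy H = C P and P F = A P + B Q, and let R ∈ ℝ^{p×q}, K ∈ ℝ^{p×n} be interface gains. Set N = n + m, A′ = diag(A + B K, F + G L), Ā = diag(A′, 0) ∈ ℝ^{(N+1)×(N+1)}, C̄ = [C 0 0] ∈ ℝ^{k×(N+1)}, and let the joint cell bounding be the (b+l)×(N+1) block matrix Ē with rows [E, E P, −f] and [E_c, E_c P, −f_c]. Let M̄ = diag(M, m₀) with M symmetric positive definite N×N, m₀ > 0, and Λ̄ = diag(λI_N, 0) with λ > 0, κ > 0,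 and let W be a symmetric (b+l)×(b+l) matrix with nonnegative entries, such that M̄ − C̄ᵀC̄ ⪰ 0 and ĀᵀM̄ + M̄Ā + ĒᵀWĒ + Λ̄M̄ ⪯ 0. Suppose x₁ : ℝ → ℝⁿ and x₂ : ℝ → ℝᵐ satisfy, for all t ≥ 0: x₁ has derivative A x₁(t) + B u₁(t) + c(t) at t with the interface u₁(t) = R ū₂(t) + (Q + R L) x₂(t) + K(x₁(t) − P x₂(t)); x₂ has derivative (F + G L) x₂(t) + G ū₂(t) at t; E x₁(t) ≥ f and E_c x₁(t) ≥ f_c entrywise; and the vectors v₁(t) = ((B R − P G) L x₂(t), 0), v₂(t) = ((B R − P G) ū₂(t), G ū₂(t)), c′(t) = (c(t), 0) in ℝ^N satisfy √(v₁(t)ᵀMv₁(t)) ≤ β₁, √(v₂(t)ᵀMv₂(t)) ≤ β₂, √(c′(t)ᵀMc′(t)) ≤ β₃. Then for all t ≥ 0, ‖C x₁(t) − H x₂(t)‖ ≤ max( κ·V(ω̄(0)), √m₀ + (2/λ)(β₁ + β₂ + β₃) ), where ω̄(t) = (x₁(t) − P x₂(t), x₂(t), 1) and V(ω̄) = (1/κ)√(ω̄ᵀM̄ω̄).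 -/

import Mathlib

open Matrix

/-- `aug v = (v, 1)`: the vector obtained by appending the entry `1` to `v`. -/
def aug {α : Type*} (v : α → ℝ) : α ⊕ Unit → ℝ := Sum.elim v fun _ => 1

/-!
In the error coordinates `z = (x₁ - P x₂, x₂)` the relation `P F = A P + B Q` turns the closed
loop into `ż = A' z + v₁ + v₂ + c'`. Evaluating the decay LMI at `ω̄ = (z, 1)`, where the cell
constraints give `Ē ω̄ ≥ 0` so that the S-procedure term is nonnegative, yields
`2 (A' z)ᵀ M z ≤ -λ zᵀ M z`; Cauchy–Schwarz for the inner product of `M` then gives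
`q̇ ≤ -λ q + 2 √q (β₁ + β₂ + β₃)` for `q = zᵀ M z`. So `q` never exceeds
`max (q 0) ((2 / λ) (β₁ + β₂ + β₃))²`, and the output LMI bounds the output error by `√(q + m₀)`.
-/

namespace Matrix

variable {ι κ : Type*} [Fintype ι] [Fintype κ]

theorem IsSymm.dotProduct_mulVec_comm {M : Matrix ι ι ℝ} (hM : M.IsSymm) (x y : ι → ℝ) :
    x ⬝ᵥ M *ᵥ y = y ⬝ᵥ M *ᵥ x := by
  rw [dotProduct_mulVec, ← vecMul_transpose, hM.eq, dotProduct_comm]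

theorem dotProduct_transpose_mul_mulVec (S T : Matrix κ ι ℝ) (x : ι → ℝ) :
    x ⬝ᵥ (Sᵀ * T) *ᵥ x = S *ᵥ x ⬝ᵥ T *ᵥ x := by
  rw [← mulVec_mulVec, dotProduct_mulVec, vecMul_transpose]

theorem dotProduct_mulVec_nonneg_of_nonneg {W : Matrix κ κ ℝ} (hW : ∀ i j, 0 ≤ W i j)
    {u : κ → ℝ} (hu : 0 ≤ u) : 0 ≤ u ⬝ᵥ W *ᵥ u :=
  Finset.sum_nonneg fun i _ => mul_nonneg (hu i) <|
    Finset.sum_nonneg fun j _ => mul_nonneg (hW i j) (hu j)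

theorem PosSemidef.dotProduct_mulVec_self_le {S : Matrix ι ι ℝ} {T : Matrix κ ι ℝ}
    (h : (S - Tᵀ * T).PosSemidef) (x : ι → ℝ) : T *ᵥ x ⬝ᵥ T *ᵥ x ≤ x ⬝ᵥ S *ᵥ x := by
  have hx := h.dotProduct_mulVec_nonneg x
  rw [star_trivial, sub_mulVec, dotProduct_sub, dotProduct_transpose_mul_mulVec] at hx
  linarith

theorem PosSemidef.dotProduct_mulVec_le_sqrt_mul_sqrt {M : Matrix ι ι ℝ} (hM : M.PosSemidef)
    (x y : ι → ℝ) : x ⬝ᵥ M *ᵥ y ≤ √(x ⬝ᵥ M *ᵥ x) * √(y ⬝ᵥ M *ᵥ y) := by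
  let _ := M.toSeminormedAddCommGroup hM
  let _ := M.toInnerProductSpace hM
  have h := real_inner_le_norm x y
  simp only [norm_eq_sqrt_re_inner (𝕜 := ℝ)] at h
  change (M *ᵥ y) ⬝ᵥ star x
      ≤ √(RCLike.re ((M *ᵥ x) ⬝ᵥ star x)) * √(RCLike.re ((M *ᵥ y) ⬝ᵥ star y)) at h
  simpa [dotProduct_comm] using h

theorem PosSemidef.two_mul_dotProduct_mulVec_le {M A' : Matrix ι ι ℝ} (hM : M.PosSemidef)
    {lam β₁ β₂ β₃ : ℝ} {z v₁ v₂ v₃ : ι → ℝ}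
    (hdecay : 2 * (A' *ᵥ z ⬝ᵥ M *ᵥ z) + lam * (z ⬝ᵥ M *ᵥ z) ≤ 0)
    (h₁ : √(v₁ ⬝ᵥ M *ᵥ v₁) ≤ β₁) (h₂ : √(v₂ ⬝ᵥ M *ᵥ v₂) ≤ β₂) (h₃ : √(v₃ ⬝ᵥ M *ᵥ v₃) ≤ β₃) :
    2 * ((A' *ᵥ z + (v₁ + v₂ + v₃)) ⬝ᵥ M *ᵥ z)
      ≤ -lam * (z ⬝ᵥ M *ᵥ z) + 2 * √(z ⬝ᵥ M *ᵥ z) * (β₁ + β₂ + β₃) := by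
  have hCS : ∀ {v : ι → ℝ} {β : ℝ}, √(v ⬝ᵥ M *ᵥ v) ≤ β → v ⬝ᵥ M *ᵥ z ≤ β * √(z ⬝ᵥ M *ᵥ z) :=
    fun h => (hM.dotProduct_mulVec_le_sqrt_mul_sqrt _ z).trans <|
      mul_le_mul_of_nonneg_right h (Real.sqrt_nonneg _)
  simp only [add_dotProduct]
  linarith [hCS h₁, hCS h₂, hCS h₃]

theorem fromBlocks_zero_mulVec_aug (X : Matrix ι ι ℝ) (D : Matrix Unit Unit ℝ) (v : ι → ℝ) :
    fromBlocks X 0 0 D *ᵥ aug v = Sum.elim (X *ᵥ v) (D *ᵥ fun _ => 1) := by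
  simp [aug, fromBlocks_mulVec]

theorem aug_dotProduct_fromBlocks_mulVec_aug (X : Matrix ι ι ℝ) (D : Matrix Unit Unit ℝ)
    (v : ι → ℝ) : aug v ⬝ᵥ fromBlocks X 0 0 D *ᵥ aug v = v ⬝ᵥ X *ᵥ v + D () () := by
  rw [fromBlocks_zero_mulVec_aug, aug, sumElim_dotProduct_sumElim]
  simp [dotProduct, mulVec]

theorem lyapunov_decay_of_lmi [DecidableEq ι] {M A' : Matrix ι ι ℝ} (hM : M.IsSymm)
    {m₀ lam : ℝ} {Eb : Matrix κ (ι ⊕ Unit) ℝ} {W : Matrix κ κ ℝ} (hW : ∀ i j, 0 ≤ W i j)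
    (hLMI : (-((fromBlocks A' 0 0 0)ᵀ * fromBlocks M 0 0 (of fun _ _ => m₀)
        + fromBlocks M 0 0 (of fun _ _ => m₀) * fromBlocks A' 0 0 0
        + Ebᵀ * W * Eb
        + fromBlocks (lam • (1 : Matrix ι ι ℝ)) 0 0 0
          * fromBlocks M 0 0 (of fun _ _ => m₀))).PosSemidef)
    {z : ι → ℝ} (hz : 0 ≤ Eb *ᵥ aug z) :
    2 * (A' *ᵥ z ⬝ᵥ M *ᵥ z) + lam * (z ⬝ᵥ M *ᵥ z) ≤ 0 := by
  have hMb : (fromBlocks M 0 0 (of fun _ _ => m₀) : Matrix (ι ⊕ Unit) (ι ⊕ Unit) ℝ).IsSymm :=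
    hM.fromBlocks (by simp) (by ext; rfl)
  have h := hLMI.dotProduct_mulVec_nonneg (aug z)
  simp only [star_trivial, neg_mulVec, dotProduct_neg, add_mulVec, dotProduct_add] at h
  have hAM : aug z ⬝ᵥ ((fromBlocks A' 0 0 0)ᵀ * fromBlocks M 0 0 (of fun _ _ => m₀)) *ᵥ aug z
      = A' *ᵥ z ⬝ᵥ M *ᵥ z := by
    rw [dotProduct_transpose_mul_mulVec, fromBlocks_zero_mulVec_aug, fromBlocks_zero_mulVec_aug,
      sumElim_dotProduct_sumElim]
    simp
  have hMA : aug z ⬝ᵥ (fromBlocks M 0 0 (of fun _ _ => m₀) * fromBlocks A' 0 0 0) *ᵥ aug z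
      = A' *ᵥ z ⬝ᵥ M *ᵥ z := by
    rw [← hMb.eq, dotProduct_transpose_mul_mulVec, dotProduct_comm,
      ← dotProduct_transpose_mul_mulVec, hAM]
  have hEWE : 0 ≤ aug z ⬝ᵥ (Ebᵀ * W * Eb) *ᵥ aug z := by
    rw [Matrix.mul_assoc, dotProduct_transpose_mul_mulVec, ← mulVec_mulVec]
    exact dotProduct_mulVec_nonneg_of_nonneg hW hz
  have hΛM : aug z ⬝ᵥ (fromBlocks (lam • (1 : Matrix ι ι ℝ)) 0 0 0
      * fromBlocks M 0 0 (of fun _ _ => m₀)) *ᵥ aug z = lam * (z ⬝ᵥ M *ᵥ z) := by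
    rw [fromBlocks_multiply]
    simpa [smul_mulVec] using aug_dotProduct_fromBlocks_mulVec_aug (lam • M) 0 z
  linarith

end Matrix

section ErrorCoordinates

variable {ι₁ ι₂ β β' : Type*} [Fintype ι₁] [Fintype ι₂]

theorem fromCols_mulVec_aug_sumElim_sub (E : Matrix β ι₁ ℝ) (P : Matrix ι₁ ι₂ ℝ) (f : β → ℝ)
    (x : ι₁ → ℝ) (y : ι₂ → ℝ) :
    fromCols (fromCols E (E * P)) (of fun i (_ : Unit) => -f i) *ᵥ aug (Sum.elim (x - P *ᵥ y) y)
      = E *ᵥ x - f := by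
  rw [aug, fromCols_mulVec_sumElim, fromCols_mulVec_sumElim, mulVec_sub, mulVec_mulVec]
  ext i
  simp [mulVec, dotProduct, sub_eq_add_neg]

theorem fromRows_mulVec_aug_sumElim_sub_nonneg {E : Matrix β ι₁ ℝ} {Ec : Matrix β' ι₁ ℝ}
    (P : Matrix ι₁ ι₂ ℝ) {f : β → ℝ} {fc : β' → ℝ} {x : ι₁ → ℝ} (y : ι₂ → ℝ)
    (hE : f ≤ E *ᵥ x) (hEc : fc ≤ Ec *ᵥ x) :
    0 ≤ fromRows (fromCols (fromCols E (E * P)) (of fun i (_ : Unit) => -f i))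
      (fromCols (fromCols Ec (Ec * P)) (of fun i (_ : Unit) => -fc i))
        *ᵥ aug (Sum.elim (x - P *ᵥ y) y) := by
  rw [fromRows_mulVec, fromCols_mulVec_aug_sumElim_sub, fromCols_mulVec_aug_sumElim_sub]
  rintro (i | i)
  exacts [sub_nonneg.2 (hE i), sub_nonneg.2 (hEc i)]

theorem fromCols_zero_mulVec_aug (C : Matrix β ι₁ ℝ) (w : ι₁ → ℝ) (y : ι₂ → ℝ) :
    (fromCols (fromCols C 0) 0 : Matrix β ((ι₁ ⊕ ι₂) ⊕ Unit) ℝ) *ᵥ aug (Sum.elim w y)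
      = C *ᵥ w := by
  simp [aug]

end ErrorCoordinates

section Derivatives

variable {α β : Type*} {t : ℝ}

theorem HasDerivAt.sumElim {f : ℝ → α → ℝ} {g : ℝ → β → ℝ} {f' : α → ℝ} {g' : β → ℝ}
    (hf : HasDerivAt f f' t) (hg : HasDerivAt g g' t) :
    HasDerivAt (fun s => Sum.elim (f s) (g s)) (Sum.elim f' g') t :=
  hasDerivAt_pi.2 <| by
    rintro (i | i)
    exacts [hasDerivAt_pi.1 hf i, hasDerivAt_pi.1 hg i]

theorem HasDerivAt.dotProduct [Fintype α] {u v : ℝ → α → ℝ} {u' v' : α → ℝ}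
    (hu : HasDerivAt u u' t) (hv : HasDerivAt v v' t) :
    HasDerivAt (fun s => u s ⬝ᵥ v s) (u' ⬝ᵥ v t + u t ⬝ᵥ v') t := by
  have h : HasDerivAt (fun s => u s ⬝ᵥ v s) (∑ i, (u' i * v t i + u t i * v' i)) t :=
    HasDerivAt.fun_sum fun i _ => (hasDerivAt_pi.1 hu i).mul (hasDerivAt_pi.1 hv i)
  rwa [Finset.sum_add_distrib] at h

theorem HasDerivAt.matrix_mulVec [Fintype β] (P : Matrix α β ℝ) {y : ℝ → β → ℝ} {y' : β → ℝ}
    (hy : HasDerivAt y y' t) : HasDerivAt (fun s => P *ᵥ y s) (P *ᵥ y') t :=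
  hasDerivAt_pi.2 fun i => by
    have h := (hasDerivAt_const t (P i)).dotProduct hy
    rw [zero_dotProduct, zero_add] at h
    exact h

theorem HasDerivAt.dotProduct_mulVec_self [Fintype α] {M : Matrix α α ℝ} (hM : M.IsSymm)
    {z : ℝ → α → ℝ} {z' : α → ℝ} (hz : HasDerivAt z z' t) :
    HasDerivAt (fun s => z s ⬝ᵥ M *ᵥ z s) (2 * (z' ⬝ᵥ M *ᵥ z t)) t := by
  convert hz.dotProduct (hz.matrix_mulVec M) using 1
  rw [hM.dotProduct_mulVec_comm (z t)]
  ring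

end Derivatives

section ClosedLoop

variable {n m p q : Type*} [Fintype n] [Fintype m] [Fintype p] [Fintype q]
  {A : Matrix n n ℝ} {B : Matrix n p ℝ} {F : Matrix m m ℝ} {G : Matrix m q ℝ}
  {L : Matrix q m ℝ} {P : Matrix n m ℝ} {Q : Matrix p m ℝ} {R : Matrix p q ℝ} {K : Matrix p n ℝ}

theorem closed_loop_error_dynamics (hPF : P * F = A * P + B * Q) (x c : n → ℝ) (y : m → ℝ)
    (u : q → ℝ) :
    Sum.elim (A *ᵥ x + B *ᵥ (R *ᵥ u + (Q + R * L) *ᵥ y + K *ᵥ (x - P *ᵥ y)) + c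
        - P *ᵥ ((F + G * L) *ᵥ y + G *ᵥ u)) ((F + G * L) *ᵥ y + G *ᵥ u)
      = fromBlocks (A + B * K) 0 0 (F + G * L) *ᵥ Sum.elim (x - P *ᵥ y) y
        + (Sum.elim ((B * R - P * G) *ᵥ (L *ᵥ y)) 0 + Sum.elim ((B * R - P * G) *ᵥ u) (G *ᵥ u)
          + Sum.elim c 0) := by
  have hPFy : P *ᵥ (F *ᵥ y) = A *ᵥ (P *ᵥ y) + B *ᵥ (Q *ᵥ y) := by
    rw [mulVec_mulVec, mulVec_mulVec, mulVec_mulVec, hPF, add_mulVec]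
  simp only [fromBlocks_mulVec, Sum.elim_comp_inl, Sum.elim_comp_inr, zero_mulVec, add_zero,
    zero_add, ← Sum.elim_add_add]
  congr 1
  simp only [mulVec_add, mulVec_sub, add_mulVec, sub_mulVec, ← mulVec_mulVec, hPFy]
  abel

theorem hasDerivAt_closed_loop_error (hPF : P * F = A * P + B * Q) {x₁ c : ℝ → n → ℝ}
    {x₂ : ℝ → m → ℝ} {u₁ : ℝ → p → ℝ} {u : ℝ → q → ℝ} {t : ℝ}
    (hx₁ : HasDerivAt x₁ (A *ᵥ x₁ t + B *ᵥ u₁ t + c t) t)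
    (hu₁ : u₁ t = R *ᵥ u t + (Q + R * L) *ᵥ x₂ t + K *ᵥ (x₁ t - P *ᵥ x₂ t))
    (hx₂ : HasDerivAt x₂ ((F + G * L) *ᵥ x₂ t + G *ᵥ u t) t) :
    HasDerivAt (fun s => Sum.elim (x₁ s - P *ᵥ x₂ s) (x₂ s))
      (fromBlocks (A + B * K) 0 0 (F + G * L) *ᵥ Sum.elim (x₁ t - P *ᵥ x₂ t) (x₂ t)
        + (Sum.elim ((B * R - P * G) *ᵥ (L *ᵥ x₂ t)) 0
          + Sum.elim ((B * R - P * G) *ᵥ u t) (G *ᵥ u t) + Sum.elim (c t) 0)) t := by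
  rw [← closed_loop_error_dynamics hPF, ← hu₁]
  exact (hx₁.sub (hx₂.matrix_mulVec P)).sumElim hx₂

end ClosedLoop

theorem le_max_of_hasDerivAt_neg {q q' : ℝ → ℝ} {a b c : ℝ} (hab : a ≤ b)
    (hq : ∀ t ∈ Set.Icc a b, HasDerivAt q (q' t) t)
    (hq' : ∀ t ∈ Set.Icc a b, c < q t → q' t < 0) : q b ≤ max (q a) c := by
  refine le_of_forall_pos_le_add fun ε hε => ?_
  refine image_le_of_deriv_right_lt_deriv_boundary (B := fun _ => max (q a) c + ε) (B' := 0)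
    (fun t ht => (hq t ht).continuousAt.continuousWithinAt)
    (fun t ht => (hq t (Set.Ico_subset_Icc_self ht)).hasDerivWithinAt)
    (by linarith [le_max_left (q a) c]) (fun _ => hasDerivAt_const _ _)
    (fun t ht hqt => hq' t (Set.Ico_subset_Icc_self ht) ?_) (Set.right_mem_Icc.2 hab)
  linarith [le_max_right (q a) c]

theorem sqrt_add_le_max_of_hasDerivAt_le {q q' : ℝ → ℝ} {a b lam β m₀ : ℝ} (hab : a ≤ b)
    (hlam : 0 < lam) (hβ : 0 ≤ β) (hm₀ : 0 ≤ m₀) (hq : ∀ t ∈ Set.Icc a b, HasDerivAt q (q' t) t)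
    (hq' : ∀ t ∈ Set.Icc a b, q' t ≤ -lam * q t + 2 * √(q t) * β) :
    √(q b + m₀) ≤ max (√(q a + m₀)) (√m₀ + 2 / lam * β) := by
  have hqb : q b ≤ max (q a) ((2 / lam * β) ^ 2) := by
    refine le_max_of_hasDerivAt_neg hab hq fun t ht hlt => (hq' t ht).trans_lt ?_
    have hpos : 0 < q t := lt_of_le_of_lt (sq_nonneg _) hlt
    have hs : 2 / lam * β < √(q t) := Real.lt_sqrt (by positivity) |>.2 hlt
    have hβs : 2 * β < lam * √(q t) := by
      rw [div_mul_eq_mul_div, div_lt_iff₀ hlam] at hs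
      linarith
    have hsq := Real.sq_sqrt hpos.le
    nlinarith [Real.sqrt_pos.2 hpos]
  have hlevel : √((2 / lam * β) ^ 2 + m₀) ≤ √m₀ + 2 / lam * β := by
    have hc : 0 ≤ 2 / lam * β := by positivity
    refine Real.sqrt_le_iff.2 ⟨by positivity, ?_⟩
    nlinarith [Real.sq_sqrt hm₀, Real.sqrt_nonneg m₀]
  calc √(q b + m₀) ≤ √(max (q a) ((2 / lam * β) ^ 2) + m₀) := Real.sqrt_le_sqrt (by linarith)
    _ = max (√(q a + m₀)) (√((2 / lam * β) ^ 2 + m₀)) := by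
      rw [← max_add_add_right, Real.sqrt_monotone.map_max]
    _ ≤ max (√(q a + m₀)) (√m₀ + 2 / lam * β) := max_le_max le_rfl hlevel

theorem EuclideanSpace.norm_equiv_symm {ι : Type*} [Fintype ι] (v : ι → ℝ) :
    ‖(EuclideanSpace.equiv ι ℝ).symm v‖ = √(v ⬝ᵥ v) := by
  rw [EuclideanSpace.norm_eq]
  simp [dotProduct, sq]

theorem stmt_14_general {n m p q k b l : ℕ}
    (A : Matrix (Fin n) (Fin n) ℝ) (B : Matrix (Fin n) (Fin p) ℝ)
    (C : Matrix (Fin k) (Fin n) ℝ)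
    (E : Matrix (Fin b) (Fin n) ℝ) (f : Fin b → ℝ)
    (F : Matrix (Fin m) (Fin m) ℝ) (G : Matrix (Fin m) (Fin q) ℝ)
    (H : Matrix (Fin k) (Fin m) ℝ) (L : Matrix (Fin q) (Fin m) ℝ)
    (Ec : Matrix (Fin l) (Fin n) ℝ) (fc : Fin l → ℝ)
    (P : Matrix (Fin n) (Fin m) ℝ) (Q : Matrix (Fin p) (Fin m) ℝ)
    (R : Matrix (Fin p) (Fin q) ℝ) (K : Matrix (Fin p) (Fin n) ℝ)
    (hH : H = C * P) (hPF : P * F = A * P + B * Q)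
    (M : Matrix (Fin n ⊕ Fin m) (Fin n ⊕ Fin m) ℝ) (hM : M.PosDef)
    (m₀ lam κ : ℝ) (hm₀ : 0 < m₀) (hlam : 0 < lam) (hκ : 0 < κ)
    (W : Matrix (Fin b ⊕ Fin l) (Fin b ⊕ Fin l) ℝ)
    (hWpos : ∀ i j, 0 ≤ W i j)
    (hCLMI : (Matrix.fromBlocks M 0 0 (Matrix.of fun _ _ => m₀)
        - (Matrix.fromCols (Matrix.fromCols C 0) 0 :
            Matrix (Fin k) ((Fin n ⊕ Fin m) ⊕ Unit) ℝ)ᵀ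
          * (Matrix.fromCols (Matrix.fromCols C 0) 0 :
            Matrix (Fin k) ((Fin n ⊕ Fin m) ⊕ Unit) ℝ)).PosSemidef)
    (hLMI : (-((Matrix.fromBlocks
            (Matrix.fromBlocks (A + B * K) 0 0 (F + G * L)) 0 0 0)ᵀ
          * Matrix.fromBlocks M 0 0 (Matrix.of fun _ _ => m₀)
        + Matrix.fromBlocks M 0 0 (Matrix.of fun _ _ => m₀)
          * Matrix.fromBlocks (Matrix.fromBlocks (A + B * K) 0 0 (F + G * L)) 0 0 0
        + (Matrix.fromRows
            (Matrix.fromCols (Matrix.fromCols E (E * P))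
              (Matrix.of fun i (_ : Unit) => -(f i)))
            (Matrix.fromCols (Matrix.fromCols Ec (Ec * P))
              (Matrix.of fun i (_ : Unit) => -(fc i))))ᵀ
          * W
          * Matrix.fromRows
            (Matrix.fromCols (Matrix.fromCols E (E * P))
              (Matrix.of fun i (_ : Unit) => -(f i)))
            (Matrix.fromCols (Matrix.fromCols Ec (Ec * P))
              (Matrix.of fun i (_ : Unit) => -(fc i)))
        + Matrix.fromBlocks (lam • (1 : Matrix (Fin n ⊕ Fin m) (Fin n ⊕ Fin m) ℝ)) 0 0 0
          * Matrix.fromBlocks M 0 0 (Matrix.of fun _ _ => m₀))).PosSemidef)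
    (x₁ : ℝ → Fin n → ℝ) (x₂ : ℝ → Fin m → ℝ)
    (u₁ : ℝ → Fin p → ℝ) (ubar₂ : ℝ → Fin q → ℝ) (c : ℝ → Fin n → ℝ)
    (β₁ β₂ β₃ : ℝ)
    (hx₁ : ∀ t ≥ (0 : ℝ), HasDerivAt x₁ (A *ᵥ x₁ t + B *ᵥ u₁ t + c t) t)
    (hu₁ : ∀ t ≥ (0 : ℝ),
      u₁ t = R *ᵥ ubar₂ t + (Q + R * L) *ᵥ x₂ t + K *ᵥ (x₁ t - P *ᵥ x₂ t))
    (hx₂ : ∀ t ≥ (0 : ℝ), HasDerivAt x₂ ((F + G * L) *ᵥ x₂ t + G *ᵥ ubar₂ t) t)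
    (hcellE : ∀ t ≥ (0 : ℝ), ∀ i, f i ≤ (E *ᵥ x₁ t) i)
    (hcellEc : ∀ t ≥ (0 : ℝ), ∀ i, fc i ≤ (Ec *ᵥ x₁ t) i)
    (hβ₁ : ∀ t ≥ (0 : ℝ),
      Real.sqrt (Sum.elim ((B * R - P * G) *ᵥ (L *ᵥ x₂ t)) 0 ⬝ᵥ
        M *ᵥ Sum.elim ((B * R - P * G) *ᵥ (L *ᵥ x₂ t)) 0) ≤ β₁)
    (hβ₂ : ∀ t ≥ (0 : ℝ),
      Real.sqrt (Sum.elim ((B * R - P * G) *ᵥ ubar₂ t) (G *ᵥ ubar₂ t) ⬝ᵥ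
        M *ᵥ Sum.elim ((B * R - P * G) *ᵥ ubar₂ t) (G *ᵥ ubar₂ t)) ≤ β₂)
    (hβ₃ : ∀ t ≥ (0 : ℝ),
      Real.sqrt (Sum.elim (c t) 0 ⬝ᵥ M *ᵥ Sum.elim (c t) 0) ≤ β₃) :
    ∀ t ≥ (0 : ℝ),
      ‖(EuclideanSpace.equiv (Fin k) ℝ).symm (C *ᵥ x₁ t - H *ᵥ x₂ t)‖ ≤
        max (κ * ((1 / κ) * Real.sqrt (aug (Sum.elim (x₁ 0 - P *ᵥ x₂ 0) (x₂ 0)) ⬝ᵥ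
            Matrix.fromBlocks M 0 0 (Matrix.of fun _ _ => m₀) *ᵥ
              aug (Sum.elim (x₁ 0 - P *ᵥ x₂ 0) (x₂ 0)))))
          (Real.sqrt m₀ + (2 / lam) * (β₁ + β₂ + β₃)) := by
  intro t ht
  have hMsymm : M.IsSymm := isHermitian_iff_isSymm.1 hM.isHermitian
  have hβ : 0 ≤ β₁ + β₂ + β₃ := by
    linarith [(Real.sqrt_nonneg _).trans (hβ₁ 0 le_rfl), (Real.sqrt_nonneg _).trans (hβ₂ 0 le_rfl),
      (Real.sqrt_nonneg _).trans (hβ₃ 0 le_rfl)]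
  have hdyn := fun s (hs : 0 ≤ s) =>
    hasDerivAt_closed_loop_error hPF (hx₁ s hs) (hu₁ s hs) (hx₂ s hs)
  have hdecay := fun s (hs : 0 ≤ s) => lyapunov_decay_of_lmi hMsymm hWpos hLMI
    (fromRows_mulVec_aug_sumElim_sub_nonneg P (x₂ s) (hcellE s hs) (hcellEc s hs))
  have hV := sqrt_add_le_max_of_hasDerivAt_le ht hlam hβ hm₀.le
    (fun s hs => (hdyn s hs.1).dotProduct_mulVec_self hMsymm)
    (fun s hs => hM.posSemidef.two_mul_dotProduct_mulVec_le (hdecay s hs.1)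
      (hβ₁ s hs.1) (hβ₂ s hs.1) (hβ₃ s hs.1))
  have hout := hCLMI.dotProduct_mulVec_self_le (aug (Sum.elim (x₁ t - P *ᵥ x₂ t) (x₂ t)))
  rw [fromCols_zero_mulVec_aug, aug_dotProduct_fromBlocks_mulVec_aug, of_apply] at hout
  rw [EuclideanSpace.norm_equiv_symm, aug_dotProduct_fromBlocks_mulVec_aug, of_apply, one_div,
    mul_inv_cancel_left₀ hκ.ne', hH, ← mulVec_mulVec, ← mulVec_sub]
  exact (Real.sqrt_le_sqrt hout).trans hV

/-- Theorem 2 of the paper, single mode-pair case (PWA system simulated by a PWA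
abstraction): one mode `(A, B, C)` of the concrete PWA system with cell `{x : E x ≥ f}`,
one mode `(F, G, H, L)` of the transformed PWA abstraction active on the region
`{x : E_c x ≥ f_c}` of the concrete state space, simulation relation `H = C P`,
`P F = A P + B Q`, interface gains `R, K`, joint cell bounding
`Ē = [[E, E P, -f], [E_c, E_c P, -f_c]]`, `M̄ = diag(M, m₀)`, `Λ̄ = diag(λ I_N, 0)`,
LMIs `M̄ - C̄ᵀ C̄ ⪰ 0` and `Āᵀ M̄ + M̄ Ā + Ēᵀ W Ē + Λ̄ M̄ ⪯ 0`. Then along the closed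
loop with the interface, with `E x₁(t) ≥ f` and `E_c x₁(t) ≥ f_c`, and `M`-weighted
bounds `β₁, β₂, β₃` on `v₁, v₂, c'`, the output error satisfies
`‖C x₁(t) - H x₂(t)‖ ≤ max (κ V(ω̄(0))) (√m₀ + (2/λ)(β₁ + β₂ + β₃))` for all `t ≥ 0`. -/
theorem stmt_14 {n m p q k b l : ℕ}
    (A : Matrix (Fin n) (Fin n) ℝ) (B : Matrix (Fin n) (Fin p) ℝ)
    (C : Matrix (Fin k) (Fin n) ℝ)
    (E : Matrix (Fin b) (Fin n) ℝ) (f : Fin b → ℝ)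
    (F : Matrix (Fin m) (Fin m) ℝ) (G : Matrix (Fin m) (Fin q) ℝ)
    (H : Matrix (Fin k) (Fin m) ℝ) (L : Matrix (Fin q) (Fin m) ℝ)
    (Ec : Matrix (Fin l) (Fin n) ℝ) (fc : Fin l → ℝ)
    (P : Matrix (Fin n) (Fin m) ℝ) (Q : Matrix (Fin p) (Fin m) ℝ)
    (R : Matrix (Fin p) (Fin q) ℝ) (K : Matrix (Fin p) (Fin n) ℝ)
    (hH : H = C * P) (hPF : P * F = A * P + B * Q)
    (M : Matrix (Fin n ⊕ Fin m) (Fin n ⊕ Fin m) ℝ) (hM : M.PosDef)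
    (m₀ lam κ : ℝ) (hm₀ : 0 < m₀) (hlam : 0 < lam) (hκ : 0 < κ)
    (W : Matrix (Fin b ⊕ Fin l) (Fin b ⊕ Fin l) ℝ)
    (hW : W.IsSymm) (hWpos : ∀ i j, 0 ≤ W i j)
    (hCLMI : (Matrix.fromBlocks M 0 0 (Matrix.of fun _ _ => m₀)
        - (Matrix.fromCols (Matrix.fromCols C 0) 0 :
            Matrix (Fin k) ((Fin n ⊕ Fin m) ⊕ Unit) ℝ)ᵀ
          * (Matrix.fromCols (Matrix.fromCols C 0) 0 :
            Matrix (Fin k) ((Fin n ⊕ Fin m) ⊕ Unit) ℝ)).PosSemidef)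
    (hLMI : (-((Matrix.fromBlocks
            (Matrix.fromBlocks (A + B * K) 0 0 (F + G * L)) 0 0 0)ᵀ
          * Matrix.fromBlocks M 0 0 (Matrix.of fun _ _ => m₀)
        + Matrix.fromBlocks M 0 0 (Matrix.of fun _ _ => m₀)
          * Matrix.fromBlocks (Matrix.fromBlocks (A + B * K) 0 0 (F + G * L)) 0 0 0
        + (Matrix.fromRows
            (Matrix.fromCols (Matrix.fromCols E (E * P))
              (Matrix.of fun i (_ : Unit) => -(f i)))
            (Matrix.fromCols (Matrix.fromCols Ec (Ec * P))
              (Matrix.of fun i (_ : Unit) => -(fc i))))ᵀ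
          * W
          * Matrix.fromRows
            (Matrix.fromCols (Matrix.fromCols E (E * P))
              (Matrix.of fun i (_ : Unit) => -(f i)))
            (Matrix.fromCols (Matrix.fromCols Ec (Ec * P))
              (Matrix.of fun i (_ : Unit) => -(fc i)))
        + Matrix.fromBlocks (lam • (1 : Matrix (Fin n ⊕ Fin m) (Fin n ⊕ Fin m) ℝ)) 0 0 0
          * Matrix.fromBlocks M 0 0 (Matrix.of fun _ _ => m₀))).PosSemidef)
    (x₁ : ℝ → Fin n → ℝ) (x₂ : ℝ → Fin m → ℝ)
    (u₁ : ℝ → Fin p → ℝ) (ubar₂ : ℝ → Fin q → ℝ) (c : ℝ → Fin n → ℝ)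
    (β₁ β₂ β₃ : ℝ)
    (hx₁ : ∀ t ≥ (0 : ℝ), HasDerivAt x₁ (A *ᵥ x₁ t + B *ᵥ u₁ t + c t) t)
    (hu₁ : ∀ t ≥ (0 : ℝ),
      u₁ t = R *ᵥ ubar₂ t + (Q + R * L) *ᵥ x₂ t + K *ᵥ (x₁ t - P *ᵥ x₂ t))
    (hx₂ : ∀ t ≥ (0 : ℝ), HasDerivAt x₂ ((F + G * L) *ᵥ x₂ t + G *ᵥ ubar₂ t) t)
    (hcellE : ∀ t ≥ (0 : ℝ), ∀ i, f i ≤ (E *ᵥ x₁ t) i)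
    (hcellEc : ∀ t ≥ (0 : ℝ), ∀ i, fc i ≤ (Ec *ᵥ x₁ t) i)
    (hβ₁ : ∀ t ≥ (0 : ℝ),
      Real.sqrt (Sum.elim ((B * R - P * G) *ᵥ (L *ᵥ x₂ t)) 0 ⬝ᵥ
        M *ᵥ Sum.elim ((B * R - P * G) *ᵥ (L *ᵥ x₂ t)) 0) ≤ β₁)
    (hβ₂ : ∀ t ≥ (0 : ℝ),
      Real.sqrt (Sum.elim ((B * R - P * G) *ᵥ ubar₂ t) (G *ᵥ ubar₂ t) ⬝ᵥ
        M *ᵥ Sum.elim ((B * R - P * G) *ᵥ ubar₂ t) (G *ᵥ ubar₂ t)) ≤ β₂)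
    (hβ₃ : ∀ t ≥ (0 : ℝ),
      Real.sqrt (Sum.elim (c t) 0 ⬝ᵥ M *ᵥ Sum.elim (c t) 0) ≤ β₃) :
    ∀ t ≥ (0 : ℝ),
      ‖(EuclideanSpace.equiv (Fin k) ℝ).symm (C *ᵥ x₁ t - H *ᵥ x₂ t)‖ ≤
        max (κ * ((1 / κ) * Real.sqrt (aug (Sum.elim (x₁ 0 - P *ᵥ x₂ 0) (x₂ 0)) ⬝ᵥ
            Matrix.fromBlocks M 0 0 (Matrix.of fun _ _ => m₀) *ᵥ
              aug (Sum.elim (x₁ 0 - P *ᵥ x₂ 0) (x₂ 0)))))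
          (Real.sqrt m₀ + (2 / lam) * (β₁ + β₂ + β₃)) :=
  stmt_14_general A B C E f F G H L Ec fc P Q R K hH hPF M hM m₀ lam κ hm₀ hlam hκ W hWpos hCLMI
    hLMI x₁ x₂ u₁ ubar₂ c β₁ β₂ β₃ hx₁ hu₁ hx₂ hcellE hcellEc hβ₁ hβ₂ hβ₃
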